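/- Well-posedness of hue: fix r ∈ (0,1) and θ ∈ ℝ, and let L(r,θ) := (1/2)·log₂((1−r²)/4)·Id₂ + (1/2)·log₂((1+r)/(1−r))·(cos θ · σ₁ + sin θ · σ₂) = log₂ ρ(r,θ). The relative entropy of the pure state ρ(1,φ) with respect to ρ(r,θ), namely f(φ) := −Tr( ρ(1,φ) · L(r,θ) ) (pure states have zero von Neumann entropy), satisfies f(φ) = 1 − (1/2)log₂(1−r²) − (cos(φ−θ)/2)·log₂((1+r)/(1−r)) and attains its minimum over φ ∈ ℝ exactly at the angles φ with φ ≡ θ (mod 2π). Hence the hue of a non-achromatic, non-pure state — the pure state minimizing the relative entropy to it — exists, is unique, and is ρ(1,θ), the pure state whose Bloch vector is parallel to that of ρ(r,θ). -/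

import Mathlib

/-- The density matrix `ρ(r,θ)`. -/
noncomputable def rho (r θ : ℝ) : Matrix (Fin 2) (Fin 2) ℝ :=
  (1 / 2 : ℝ) •
    !![1 + r * Real.cos θ, r * Real.sin θ; r * Real.sin θ, 1 - r * Real.cos θ]

/-- The real Pauli matrix `σ₁`. -/
def sigma1 : Matrix (Fin 2) (Fin 2) ℝ := !![1, 0; 0, -1]

/-- The real Pauli matrix `σ₂`. -/
def sigma2 : Matrix (Fin 2) (Fin 2) ℝ := !![0, 1; 1, 0]

/-- `L(r,θ) = log₂ ρ(r,θ)` written explicitly. -/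
noncomputable def Lmat (r θ : ℝ) : Matrix (Fin 2) (Fin 2) ℝ :=
  ((1 / 2) * Real.logb 2 ((1 - r ^ 2) / 4)) • (1 : Matrix (Fin 2) (Fin 2) ℝ) +
    ((1 / 2) * Real.logb 2 ((1 + r) / (1 - r))) •
      (Real.cos θ • sigma1 + Real.sin θ • sigma2)

/-!
Against a pure state `ρ(1,φ)` the identity part of `log₂ ρ(r,θ)` contributes a constant and the
Pauli part contributes `cos φ cos θ + sin φ sin θ = cos (φ - θ)` times the positive weight
`log₂ ((1+r)/(1-r))`, so the relative entropy is minimal exactly where `cos (φ - θ) = 1`.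
-/

open Real

lemma Real.logb_two_div_four {x : ℝ} (hx : x ≠ 0) : logb 2 (x / 4) = logb 2 x - 2 := by
  have h4 : logb 2 4 = 2 := by
    rw [show (4 : ℝ) = 2 ^ (2 : ℕ) by norm_num, logb_pow, logb_self_eq_one one_lt_two]
    norm_num
  rw [logb_div hx four_ne_zero, h4]

lemma Real.logb_two_one_add_div_one_sub_pos {r : ℝ} (h0 : 0 < r) (h1 : r < 1) :
    0 < logb 2 ((1 + r) / (1 - r)) := by
  apply logb_pos one_lt_two
  rw [lt_div_iff₀ (by linarith)]
  linarith

lemma Real.cos_sub_eq_one_iff (φ θ : ℝ) : cos (φ - θ) = 1 ↔ ∃ k : ℤ, φ = θ + 2 * π * k := by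
  rw [cos_eq_one_iff]
  constructor <;> rintro ⟨k, hk⟩ <;> exact ⟨k, by linarith⟩

lemma neg_trace_rho_one_mul_Lmat {r : ℝ} (hr : r ^ 2 ≠ 1) (θ φ : ℝ) :
    -(rho 1 φ * Lmat r θ).trace =
      1 - (1 / 2) * logb 2 (1 - r ^ 2) - (cos (φ - θ) / 2) * logb 2 ((1 + r) / (1 - r)) := by
  have hsplit := logb_two_div_four (sub_ne_zero.mpr hr.symm)
  simp only [rho, Lmat, sigma1, sigma2, Matrix.trace_fin_two, Matrix.mul_apply, Fin.sum_univ_two,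
    Matrix.smul_apply, Matrix.add_apply, Matrix.one_apply, Matrix.cons_val', Matrix.cons_val_zero,
    Matrix.cons_val_one, Matrix.empty_val', Matrix.cons_val_fin_one, Matrix.of_apply, smul_eq_mul]
  norm_num [hsplit, cos_sub]
  ring

/-- Well-posedness of hue: for `0 < r < 1`, the relative entropy
`f(φ) = −Tr(ρ(1,φ)·log₂ ρ(r,θ))` of the pure state `ρ(1,φ)` with respect to `ρ(r,θ)`
equals `1 − (1/2)log₂(1−r²) − (cos(φ−θ)/2)·log₂((1+r)/(1−r))`, and it attains its
minimum over `φ ∈ ℝ` exactly at the angles `φ ≡ θ (mod 2π)`: the hue exists, is unique,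
and is the pure state `ρ(1,θ)` whose Bloch vector is parallel to that of `ρ(r,θ)`. -/
theorem hue_wellPosed (r θ : ℝ) (hr : r ∈ Set.Ioo (0 : ℝ) 1) :
    (∀ φ : ℝ, -(rho 1 φ * Lmat r θ).trace =
        1 - (1 / 2) * Real.logb 2 (1 - r ^ 2)
          - (Real.cos (φ - θ) / 2) * Real.logb 2 ((1 + r) / (1 - r))) ∧
    (∀ φ : ℝ, -(rho 1 θ * Lmat r θ).trace ≤ -(rho 1 φ * Lmat r θ).trace) ∧
    (∀ φ : ℝ, -(rho 1 φ * Lmat r θ).trace = -(rho 1 θ * Lmat r θ).trace ↔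
        ∃ k : ℤ, φ = θ + 2 * Real.pi * k) := by
  have hr2 : r ^ 2 ≠ 1 := by nlinarith [hr.1, hr.2]
  have hL := logb_two_one_add_div_one_sub_pos hr.1 hr.2
  refine ⟨neg_trace_rho_one_mul_Lmat hr2 θ, fun φ => ?_, fun φ => ?_⟩ <;>
    simp only [neg_trace_rho_one_mul_Lmat hr2, sub_self, cos_zero]
  · nlinarith [cos_le_one (φ - θ)]
  · rw [← cos_sub_eq_one_iff, sub_right_inj, mul_left_inj' hL.ne']
    constructor <;> intro h <;> linarith
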